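/- arXiv:1312.2461 — 2 statements merged into one kernel-verified Lean document; each statement's English description precedes it below -/
import Mathlib

section
/- For real w₀ and w ∈ ℝ³, m a unit vector, p ∈ [0,1), η = √(1-p²), the quadratic form (1/4)|∇w₀|² + η‖∇w‖² + (1-η)|∇(w·m)|² - p ∇w₀·∇(w·m) (with ∇ replaced by arbitrary vectors a₀ ∈ ℝᵈ for w₀ and a matrix A ∈ ℝ^{3×d} for w) is bounded below by λ₋(|a₀|² + |Aᵀm|²) + (η²/2)‖A‖², where λ₋ is the smaller eigenvalue of [[1/4, -p/2], [-p/2, 1-η²/2]]. -/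
/-!
The form minus `λ₋ (|a₀|² + |Aᵀm|²) + (η²/2) ∑ |aₖ|²` splits as
`η (1 - η/2) (∑ |aₖ|² - |Aᵀm|²)`, which is nonnegative because `|Aᵀm| ≤ ‖A‖` for a unit `m`,
plus a quadratic form in `(|a₀|, |Aᵀm|)` with matrix `[[1/4, -p/2], [-p/2, 1 - η²/2]] - λ₋ I`
(after Cauchy–Schwarz on `a₀ · Aᵀm`), which is positive semidefinite since `λ₋` is its
smaller eigenvalue.
-/

open RealInnerProductSpace

lemma mul_mul_le_of_sq_le_four_mul {α β c x y : ℝ} (hα : 0 ≤ α) (hβ : 0 ≤ β)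
    (hc : c ^ 2 ≤ 4 * α * β) : c * (x * y) ≤ α * x ^ 2 + β * y ^ 2 := by
  rcases hα.eq_or_lt with rfl | hα
  · have hc0 : c = 0 := by nlinarith [sq_nonneg c]
    subst hc0
    nlinarith [sq_nonneg y]
  · have hsq : 4 * α * (α * x ^ 2 + β * y ^ 2 - c * (x * y))
        = (2 * α * x - c * y) ^ 2 + (4 * α * β - c ^ 2) * y ^ 2 := by ring
    nlinarith [sq_nonneg (2 * α * x - c * y), mul_nonneg (sub_nonneg.2 hc) (sq_nonneg y)]

/-- The smaller eigenvalue of the symmetric matrix `[[a, b], [b, c]]`. -/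
noncomputable def symmEigenvalueMin (a b c : ℝ) : ℝ :=
  (a + c) / 2 - √((a - c) ^ 2 + 4 * b ^ 2) / 2

section symmEigenvalueMin

variable (a b c : ℝ)

lemma abs_sub_le_sqrt_discr : |a - c| ≤ √((a - c) ^ 2 + 4 * b ^ 2) :=
  Real.abs_le_sqrt (by nlinarith [sq_nonneg b])

lemma symmEigenvalueMin_le_left : symmEigenvalueMin a b c ≤ a := by
  have := abs_sub_le_sqrt_discr a b c
  unfold symmEigenvalueMin
  linarith [neg_abs_le (a - c)]

lemma symmEigenvalueMin_le_right : symmEigenvalueMin a b c ≤ c := by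
  have := abs_sub_le_sqrt_discr a b c
  unfold symmEigenvalueMin
  linarith [le_abs_self (a - c)]

lemma sub_symmEigenvalueMin_mul_sub :
    (a - symmEigenvalueMin a b c) * (c - symmEigenvalueMin a b c) = b ^ 2 := by
  have h := Real.sq_sqrt (show 0 ≤ (a - c) ^ 2 + 4 * b ^ 2 by positivity)
  unfold symmEigenvalueMin
  linear_combination h / 4

lemma symmEigenvalueMin_mul_le (x y : ℝ) :
    symmEigenvalueMin a b c * (x ^ 2 + y ^ 2) ≤ a * x ^ 2 + 2 * b * (x * y) + c * y ^ 2 := by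
  have := mul_mul_le_of_sq_le_four_mul (c := -2 * b) (x := x) (y := y)
    (sub_nonneg.2 (symmEigenvalueMin_le_left a b c))
    (sub_nonneg.2 (symmEigenvalueMin_le_right a b c))
    (le_of_eq (by rw [mul_assoc, sub_symmEigenvalueMin_mul_sub]; ring))
  linarith

end symmEigenvalueMin

lemma norm_sum_smul_sq_le {ι E : Type*} [Fintype ι] [SeminormedAddCommGroup E] [NormedSpace ℝ E]
    (m : EuclideanSpace ℝ ι) (a : ι → E) :
    ‖∑ i, m i • a i‖ ^ 2 ≤ ‖m‖ ^ 2 * ∑ i, ‖a i‖ ^ 2 := by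
  have htri : ‖∑ i, m i • a i‖ ≤ ∑ i, ‖m i‖ * ‖a i‖ :=
    (norm_sum_le _ _).trans_eq (by simp only [norm_smul])
  calc ‖∑ i, m i • a i‖ ^ 2 ≤ (∑ i, ‖m i‖ * ‖a i‖) ^ 2 := by gcongr
    _ ≤ (∑ i, ‖m i‖ ^ 2) * ∑ i, ‖a i‖ ^ 2 := Finset.sum_mul_sq_le_sq_mul_sq _ _ _
    _ = ‖m‖ ^ 2 * ∑ i, ‖a i‖ ^ 2 := by rw [EuclideanSpace.norm_sq_eq]

theorem stmt_2_general (d : ℕ)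
    (p : ℝ) (hp0 : 0 ≤ p) (hp1 : p < 1)
    (η : ℝ) (hη : η = Real.sqrt (1 - p ^ 2))
    (m : EuclideanSpace ℝ (Fin 3)) (hm : ‖m‖ = 1)
    (a₀ : EuclideanSpace ℝ (Fin d)) (a : Fin 3 → EuclideanSpace ℝ (Fin d))
    (lamMinus : ℝ)
    (hminus : lamMinus = (5 - 2 * η ^ 2) / 8 - Real.sqrt ((5 - 2 * η ^ 2) ^ 2 - 8 * η ^ 2) / 8) :
    lamMinus * (‖a₀‖ ^ 2 + ‖∑ k, m k • a k‖ ^ 2) + (η ^ 2 / 2) * ∑ k, ‖a k‖ ^ 2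
      ≤ (1/4) * ‖a₀‖ ^ 2 + η * ∑ k, ‖a k‖ ^ 2 + (1 - η) * ‖∑ k, m k • a k‖ ^ 2
        - p * ⟪a₀, ∑ k, m k • a k⟫ := by
  have hη2 : η ^ 2 = 1 - p ^ 2 := by rw [hη, Real.sq_sqrt (by nlinarith)]
  have hη0 : 0 ≤ η := hη ▸ Real.sqrt_nonneg _
  have hη1 : η ≤ 1 := by nlinarith
  have hlam : lamMinus = symmEigenvalueMin (1 / 4) (-p / 2) (1 - η ^ 2 / 2) := by
    have hdiscr : (1 / 4 - (1 - η ^ 2 / 2)) ^ 2 + 4 * (-p / 2) ^ 2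
        = (√((5 - 2 * η ^ 2) ^ 2 - 8 * η ^ 2) / 4) ^ 2 := by
      have hD := Real.sq_sqrt (show 0 ≤ (5 - 2 * η ^ 2) ^ 2 - 8 * η ^ 2 by nlinarith)
      linear_combination hη2 - hD / 16
    rw [hminus, symmEigenvalueMin, hdiscr, Real.sqrt_sq (by positivity)]
    ring
  set T := ∑ k, m k • a k
  have hT : ‖T‖ ^ 2 ≤ ∑ k, ‖a k‖ ^ 2 := by simpa [hm] using norm_sum_smul_sq_le m a
  have hinner : p * ⟪a₀, T⟫ ≤ p * (‖a₀‖ * ‖T‖) :=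
    mul_le_mul_of_nonneg_left (real_inner_le_norm _ _) hp0
  have hquad := hlam ▸ symmEigenvalueMin_mul_le (1 / 4) (-p / 2) (1 - η ^ 2 / 2) ‖a₀‖ ‖T‖
  have hslack : 0 ≤ η * (1 - η / 2) * (∑ k, ‖a k‖ ^ 2 - ‖T‖ ^ 2) :=
    mul_nonneg (mul_nonneg hη0 (by linarith)) (sub_nonneg.2 hT)
  linarith

/-- coercivity estimate for the quadratic form, `a₀` playing the role
of `∇w₀` and rows `a k` of `A` the role of `∇wₖ`; `Aᵀm = ∑ k, m k • a k`. -/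
theorem stmt_2 (d : ℕ) (hd : 1 ≤ d)
    (p : ℝ) (hp0 : 0 ≤ p) (hp1 : p < 1)
    (η : ℝ) (hη : η = Real.sqrt (1 - p ^ 2))
    (m : EuclideanSpace ℝ (Fin 3)) (hm : ‖m‖ = 1)
    (a₀ : EuclideanSpace ℝ (Fin d)) (a : Fin 3 → EuclideanSpace ℝ (Fin d))
    (lamMinus : ℝ)
    (hminus : lamMinus = (5 - 2 * η ^ 2) / 8 - Real.sqrt ((5 - 2 * η ^ 2) ^ 2 - 8 * η ^ 2) / 8) :
    lamMinus * (‖a₀‖ ^ 2 + ‖∑ k, m k • a k‖ ^ 2) + (η ^ 2 / 2) * ∑ k, ‖a k‖ ^ 2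
      ≤ (1/4) * ‖a₀‖ ^ 2 + η * ∑ k, ‖a k‖ ^ 2 + (1 - η) * ‖∑ k, m k • a k‖ ^ 2
        - p * ⟪a₀, ∑ k, m k • a k⟫ :=
  stmt_2_general d p hp0 hp1 η hη m hm a₀ a lamMinus hminus
end

section
/- Suppose nonnegative absolutely continuous functions y_m : [0,T] → ℝ (m ∈ ℕ) satisfy y_m' + ε_m y_m ≤ (a_m + ε_m)c_m (sup_{[0,T]} y_{m-1})² + a_m with ε_m = 2^{-m}, a_m = 2^m(2^m-1)K, c_m = 2^{dm}K₄ for constants K, K₄ ≥ 0, d ≥ 1. If additionally y_m(0) ≤ B^{2^m} for some B ≥ 1, then sup_m (sup_{[0,T]} y_m)^{2^{-m}} < ∞. -/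
/-!
Comparing with the linear ODE `z' + ε z = A` gives `sup y_m ≤ max (y_m 0) (A_m / ε_m)`, and the
explicit coefficients turn this into `M_m ≤ G R^m max (M_{m-1}^2, B^(2^m))` with `R = 2^(d+3)`.
Multiplying by the weight `G R^(m+1)` absorbs the polynomial factor into a pure squaring
recursion, whose solutions grow at most like `D^(2^m)`.
-/

open Set Real

theorem le_max_of_hasDerivAt_add_mul_le {f f' : ℝ → ℝ} {a b ε A : ℝ} (hε : 0 < ε)
    (hf : ContinuousOn f (Icc a b)) (hf' : ∀ t ∈ Icc a b, HasDerivAt f (f' t) t)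
    (bound : ∀ t ∈ Icc a b, f' t + ε * f t ≤ A) :
    ∀ t ∈ Icc a b, f t ≤ max (f a) (A / ε) := by
  intro t ht
  have hgron := le_gronwallBound_of_liminf_deriv_right_le (K := -ε) (ε := A) hf
    (fun x hx _ hr => (hf' x (Ico_subset_Icc_self hx)).hasDerivWithinAt.liminf_right_slope_le hr)
    le_rfl (fun x hx => by linarith [bound x (Ico_subset_Icc_self hx)]) t ht
  rw [gronwallBound_of_K_ne_0 (neg_ne_zero.mpr hε.ne')] at hgron
  dsimp only at hgron
  -- Gronwall's bound is a convex combination of `f a` and the equilibrium value `A / ε`.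
  set l := exp (-ε * (t - a))
  have hl : l ≤ 1 := exp_le_one_iff.mpr (by nlinarith [ht.1])
  calc f t ≤ l • f a + (1 - l) • (A / ε) := by
        convert hgron using 1; simp only [smul_eq_mul]; field_simp; ring
    _ ≤ max (f a) (A / ε) := Convex.combo_le_max _ _ (exp_pos _).le (by linarith) (by ring)

theorem sSup_image_Icc_le_max_of_hasDerivAt {f f' : ℝ → ℝ} {a b ε A : ℝ} (hab : a ≤ b)
    (hε : 0 < ε) (hf : ContinuousOn f (Icc a b)) (hf' : ∀ t ∈ Icc a b, HasDerivAt f (f' t) t)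
    (bound : ∀ t ∈ Icc a b, f' t + ε * f t ≤ A) :
    sSup (f '' Icc a b) ≤ max (f a) (A / ε) :=
  csSup_le ((nonempty_Icc.mpr hab).image f) <| forall_mem_image.mpr <|
    le_max_of_hasDerivAt_add_mul_le hε hf hf' bound

theorem exists_le_pow_two_pow_of_le_mul_max_sq {u : ℕ → ℝ} {C R B : ℝ} (hu : ∀ n, 0 ≤ u n)
    (hC : 1 ≤ C) (hR : 1 ≤ R) (hB : 0 ≤ B)
    (h : ∀ m, u (m + 1) ≤ C * R ^ (m + 1) * max (u m ^ 2) (B ^ 2 ^ (m + 1))) :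
    ∃ D, 0 ≤ D ∧ ∀ m, u m ≤ D ^ 2 ^ m := by
  set w : ℕ → ℝ := fun m => C * R ^ (m + 2) with hw
  have hw_one : ∀ m, 1 ≤ w m := fun m => one_le_mul_of_one_le_of_one_le hC (one_le_pow₀ hR)
  have hw_sq : ∀ m, w (m + 1) * (C * R ^ (m + 1)) = w m ^ 2 := fun m => by simp only [hw]; ring
  have hw_le : ∀ m, w m ≤ (C * R ^ 2) ^ 2 ^ m := by
    intro m
    rw [hw, mul_pow, ← pow_mul]
    have : m + 2 ≤ 2 * 2 ^ m := by have := Nat.lt_two_pow_self (n := m); omega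
    exact mul_le_mul (le_self_pow₀ hC (by positivity)) (pow_le_pow_right₀ hR this)
      (by positivity) (by positivity)
  clear_value w
  set E := C * R ^ 2 * B
  have hstep : ∀ m, w (m + 1) * u (m + 1) ≤ max ((w m * u m) ^ 2) (E ^ 2 ^ (m + 1)) := by
    intro m
    calc w (m + 1) * u (m + 1)
        ≤ w (m + 1) * (C * R ^ (m + 1) * max (u m ^ 2) (B ^ 2 ^ (m + 1))) :=
          mul_le_mul_of_nonneg_left (h m) (by linarith [hw_one (m + 1)])
      _ = max ((w m * u m) ^ 2) (w m ^ 2 * B ^ 2 ^ (m + 1)) := by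
          rw [← mul_assoc, hw_sq, mul_max_of_nonneg _ _ (sq_nonneg _), mul_pow]
      _ ≤ max ((w m * u m) ^ 2) (E ^ 2 ^ (m + 1)) := by
          gcongr
          calc w m ^ 2 * B ^ 2 ^ (m + 1) ≤ ((C * R ^ 2) ^ 2 ^ m) ^ 2 * B ^ 2 ^ (m + 1) := by
                gcongr; exacts [by linarith [hw_one m], hw_le m]
            _ = E ^ 2 ^ (m + 1) := by rw [← pow_mul, ← pow_succ, ← mul_pow]
  set D := max (w 0 * u 0) E
  have hwu : ∀ m, w m * u m ≤ D ^ 2 ^ m := by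
    intro m
    induction m with
    | zero => simp [D]
    | succ m ih =>
      refine (hstep m).trans (max_le ?_ ?_)
      · rw [pow_succ 2 m, pow_mul]
        gcongr
        exact mul_nonneg (by linarith [hw_one m]) (hu m)
      · gcongr; exact le_max_right _ _
  refine ⟨D, le_max_of_le_left (mul_nonneg (by linarith [hw_one 0]) (hu 0)), fun m => ?_⟩
  exact (le_mul_of_one_le_left (hu m) (hw_one m)).trans (hwu m)

theorem rhs_div_two_zpow_neg_le {K K₄ M β : ℝ} (hK : 0 ≤ K) (hK₄ : 0 ≤ K₄) (hβ : 1 ≤ β)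
    (d n : ℕ) :
    (((2 : ℝ) ^ n * ((2 : ℝ) ^ n - 1) * K + (2 : ℝ) ^ (-(n : ℤ))) * ((2 : ℝ) ^ (d * n) * K₄) * M ^ 2
        + (2 : ℝ) ^ n * ((2 : ℝ) ^ n - 1) * K) / (2 : ℝ) ^ (-(n : ℤ))
      ≤ (K + 1) * (K₄ + 1) * ((2 : ℝ) ^ (d + 3)) ^ n * max (M ^ 2) β := by
  have hR : ((2 : ℝ) ^ (d + 3)) ^ n = 2 ^ (d * n) * (2 ^ n) ^ 3 := by
    rw [← pow_mul, ← pow_mul, ← pow_add]; ring_nf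
  rw [zpow_neg, zpow_natCast, hR]
  set x : ℝ := 2 ^ n
  set w : ℝ := 2 ^ (d * n)
  set μ := max (M ^ 2) β
  have hx : 1 ≤ x := one_le_pow₀ one_le_two
  have hw : 1 ≤ w := one_le_pow₀ one_le_two
  have hμ : 1 ≤ μ := le_max_of_le_right hβ
  have hMμ : M ^ 2 ≤ μ := le_max_left _ _
  have hx_sub : x ^ 2 * (x - 1) ≤ x ^ 3 := by nlinarith
  have hx_cube : 1 ≤ x ^ 3 := one_le_pow₀ hx
  calc _ = (x ^ 2 * (x - 1) * K + 1) * (w * K₄) * M ^ 2 + x ^ 2 * (x - 1) * K := by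
        field_simp
    _ ≤ ((K + 1) * x ^ 3) * (w * K₄) * μ + (K * x ^ 3) * (w * μ) := by
        gcongr ?_ * _ * ?_ + ?_
        · nlinarith
        · calc x ^ 2 * (x - 1) * K ≤ K * x ^ 3 := by nlinarith
            _ ≤ K * x ^ 3 * (w * μ) :=
              le_mul_of_one_le_right (by positivity) (one_le_mul_of_one_le_of_one_le hw hμ)
    _ ≤ (K + 1) * (K₄ + 1) * (w * x ^ 3) * μ := by
        have : 0 ≤ w * x ^ 3 * μ := by positivity
        nlinarith

theorem stmt_19_general (T : ℝ) (hT : 0 < T) (d : ℕ)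
    (K K₄ B : ℝ) (hK : 0 ≤ K) (hK₄ : 0 ≤ K₄) (hB : 1 ≤ B)
    (y y' : ℕ → ℝ → ℝ)
    (M : ℕ → ℝ) (hM : ∀ m, M m = sSup (y m '' Set.Icc 0 T))
    (hcont : ∀ m, ContinuousOn (y m) (Set.Icc 0 T))
    (hnonneg : ∀ m, ∀ t ∈ Set.Icc (0 : ℝ) T, 0 ≤ y m t)
    (hderiv : ∀ m, ∀ t ∈ Set.Icc (0 : ℝ) T, HasDerivAt (y m) (y' m t) t)
    (hrec : ∀ m : ℕ, 1 ≤ m → ∀ t ∈ Set.Icc (0 : ℝ) T,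
      y' m t + (2 : ℝ) ^ (-(m : ℤ)) * y m t
        ≤ ((2 : ℝ) ^ m * ((2 : ℝ) ^ m - 1) * K + (2 : ℝ) ^ (-(m : ℤ)))
            * ((2 : ℝ) ^ (d * m) * K₄) * (M (m - 1)) ^ 2
          + (2 : ℝ) ^ m * ((2 : ℝ) ^ m - 1) * K)
    (hinit : ∀ m : ℕ, y m 0 ≤ B ^ (2 ^ m)) :
    ∃ C : ℝ, ∀ m : ℕ, (M m) ^ ((1 : ℝ) / 2 ^ m) ≤ C := by
  have h0 : (0 : ℝ) ∈ Icc 0 T := ⟨le_rfl, hT.le⟩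
  have hM_nonneg : ∀ m, 0 ≤ M m := fun m => (hnonneg m 0 h0).trans <| hM m ▸
    le_csSup (isCompact_Icc.image_of_continuousOn (hcont m)).bddAbove (mem_image_of_mem _ h0)
  set G := (K + 1) * (K₄ + 1)
  set R : ℝ := 2 ^ (d + 3)
  have hG : 1 ≤ G := one_le_mul_of_one_le_of_one_le (by linarith) (by linarith)
  have hR : 1 ≤ R := one_le_pow₀ one_le_two
  have hstep : ∀ m, M (m + 1) ≤ G * R ^ (m + 1) * max (M m ^ 2) (B ^ 2 ^ (m + 1)) := by
    intro m
    have hβ : 1 ≤ B ^ 2 ^ (m + 1) := one_le_pow₀ hB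
    have hsup := sSup_image_Icc_le_max_of_hasDerivAt hT.le (zpow_pos two_pos _) (hcont (m + 1))
      (hderiv (m + 1)) (hrec (m + 1) m.succ_pos)
    rw [← hM, Nat.add_sub_cancel] at hsup
    refine hsup.trans (max_le ((hinit _).trans ?_) (rhs_div_two_zpow_neg_le hK hK₄ hβ d (m + 1)))
    exact (le_max_right _ _).trans (le_mul_of_one_le_left (by positivity)
      (one_le_mul_of_one_le_of_one_le hG (one_le_pow₀ hR)))
  obtain ⟨D, hD, hMD⟩ :=
    exists_le_pow_two_pow_of_le_mul_max_sq hM_nonneg hG hR (zero_le_one.trans hB) hstep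
  refine ⟨D, fun m => ?_⟩
  rw [one_div, Real.rpow_inv_le_iff_of_pos (hM_nonneg m) hD (by positivity)]
  exact_mod_cast hMD m

theorem stmt_19 (T : ℝ) (hT : 0 < T) (d : ℕ) (hd : 1 ≤ d)
    (K K₄ B : ℝ) (hK : 0 ≤ K) (hK₄ : 0 ≤ K₄) (hB : 1 ≤ B)
    (y y' : ℕ → ℝ → ℝ)
    (M : ℕ → ℝ) (hM : ∀ m, M m = sSup (y m '' Set.Icc 0 T))
    (hcont : ∀ m, ContinuousOn (y m) (Set.Icc 0 T))
    (hnonneg : ∀ m, ∀ t ∈ Set.Icc (0 : ℝ) T, 0 ≤ y m t)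
    (hderiv : ∀ m, ∀ t ∈ Set.Icc (0 : ℝ) T, HasDerivAt (y m) (y' m t) t)
    (hrec : ∀ m : ℕ, 1 ≤ m → ∀ t ∈ Set.Icc (0 : ℝ) T,
      y' m t + (2 : ℝ) ^ (-(m : ℤ)) * y m t
        ≤ ((2 : ℝ) ^ m * ((2 : ℝ) ^ m - 1) * K + (2 : ℝ) ^ (-(m : ℤ)))
            * ((2 : ℝ) ^ (d * m) * K₄) * (M (m - 1)) ^ 2
          + (2 : ℝ) ^ m * ((2 : ℝ) ^ m - 1) * K)
    (hinit : ∀ m : ℕ, y m 0 ≤ B ^ (2 ^ m)) :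
    ∃ C : ℝ, ∀ m : ℕ, (M m) ^ ((1 : ℝ) / 2 ^ m) ≤ C :=
  stmt_19_general T hT d K K₄ B hK hK₄ hB y y' M hM hcont hnonneg hderiv hrec hinit
end
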